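/- arXiv:2003.07889 — 2 statements merged into one kernel-verified Lean document; each statement's English description precedes it below -/
import Mathlib

section
/- The Pauli diagonal map S on 2×2 matrices defined by S(I) = I, S(σ_x) = a σ_x, S(σ_y) = b σ_y, S(σ_z) = c σ_z (extended linearly) is completely positive if and only if |a + b| ≤ 1 + c and |a − b| ≤ 1 − c. -/
open Matrix ComplexOrder

noncomputable def sigmaX : Matrix (Fin 2) (Fin 2) ℂ := !![0, 1; 1, 0]
noncomputable def sigmaY : Matrix (Fin 2) (Fin 2) ℂ := !![0, -Complex.I; Complex.I, 0]
noncomputable def sigmaZ : Matrix (Fin 2) (Fin 2) ℂ := !![1, 0; 0, -1]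

/-- The Pauli diagonal map with parameters `(a, b, c)`: the linear map on `M₂(ℂ)` determined by
`I ↦ I`, `σx ↦ a σx`, `σy ↦ b σy`, `σz ↦ c σz`, written out via the Pauli expansion of `X`. -/
noncomputable def pauliMap (a b c : ℝ) (X : Matrix (Fin 2) (Fin 2) ℂ) :
    Matrix (Fin 2) (Fin 2) ℂ :=
  ((X 0 0 + X 1 1) / 2) • (1 : Matrix (Fin 2) (Fin 2) ℂ) +
    ((a : ℂ) * ((X 0 1 + X 1 0) / 2)) • sigmaX +
    ((b : ℂ) * (Complex.I * (X 0 1 - X 1 0) / 2)) • sigmaY +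
    ((c : ℂ) * ((X 0 0 - X 1 1) / 2)) • sigmaZ

/-- The Choi matrix `Σ_{ij} E_{ij} ⊗ T(E_{ij})` of a map `T` on `M₂(ℂ)`. -/
noncomputable def choiMatrix (T : Matrix (Fin 2) (Fin 2) ℂ → Matrix (Fin 2) (Fin 2) ℂ) :
    Matrix (Fin 2 × Fin 2) (Fin 2 × Fin 2) ℂ :=
  fun p q => T (Matrix.single p.1 q.1 1) p.2 q.2


private lemma quadForm (a b c : ℝ) (x : Fin 2 × Fin 2 → ℂ) :
    star x ⬝ᵥ (choiMatrix (pauliMap a b c)) *ᵥ x =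
      (((1+c)/2 : ℝ) : ℂ) * (starRingEnd ℂ (x (0,0)) * x (0,0) + starRingEnd ℂ (x (1,1)) * x (1,1)) +
      (((a+b)/2 : ℝ) : ℂ) * (starRingEnd ℂ (x (0,0)) * x (1,1) + starRingEnd ℂ (x (1,1)) * x (0,0)) +
      (((1-c)/2 : ℝ) : ℂ) * (starRingEnd ℂ (x (0,1)) * x (0,1) + starRingEnd ℂ (x (1,0)) * x (1,0)) +
      (((a-b)/2 : ℝ) : ℂ) * (starRingEnd ℂ (x (0,1)) * x (1,0) + starRingEnd ℂ (x (1,0)) * x (0,1)) := by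
  simp [dotProduct, mulVec, Fintype.sum_prod_type, Fin.sum_univ_two, choiMatrix, pauliMap,
    sigmaX, sigmaY, sigmaZ, Matrix.single, Matrix.one_apply]
  ring_nf
  simp only [Complex.I_sq]
  ring

private lemma keyIneq (t s : ℝ) (h : |s| ≤ t) (u v : ℂ) :
    0 ≤ ((t/2 : ℝ) : ℂ) * (starRingEnd ℂ u * u + starRingEnd ℂ v * v) +
        ((s/2 : ℝ) : ℂ) * (starRingEnd ℂ u * v + starRingEnd ℂ v * u) := by
  obtain ⟨h1, h2⟩ := abs_le.mp h
  have heq : ((t/2 : ℝ) : ℂ) * (starRingEnd ℂ u * u + starRingEnd ℂ v * v) +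
      ((s/2 : ℝ) : ℂ) * (starRingEnd ℂ u * v + starRingEnd ℂ v * u) =
      ((t/2 * (u.re^2 + u.im^2 + v.re^2 + v.im^2) + s * (u.re*v.re + u.im*v.im) : ℝ) : ℂ) := by
    simp [Complex.ext_iff, Complex.mul_re, Complex.mul_im, ← Complex.ofReal_pow]
    constructor <;> ring
  rw [heq, Complex.zero_le_real]
  nlinarith [sq_nonneg (u.re + v.re), sq_nonneg (u.re - v.re), sq_nonneg (u.im + v.im),
    sq_nonneg (u.im - v.im), mul_nonneg (sub_nonneg.2 h2) (sq_nonneg (u.re - v.re)),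
    mul_nonneg (sub_nonneg.2 h2) (sq_nonneg (u.im - v.im)),
    mul_nonneg (by linarith : (0:ℝ) ≤ t + s) (sq_nonneg (u.re + v.re)),
    mul_nonneg (by linarith : (0:ℝ) ≤ t + s) (sq_nonneg (u.im + v.im))]

private lemma hermPart (a b c : ℝ) : (choiMatrix (pauliMap a b c)).IsHermitian := by
  ext p q
  fin_cases p <;> fin_cases q <;>
    simp [choiMatrix, pauliMap, sigmaX, sigmaY, sigmaZ, Matrix.single,
      Matrix.one_apply, Matrix.conjTranspose_apply, Complex.ext_iff] <;> ring

theorem pauliMap_completelyPositive_iff (a b c : ℝ) :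
    (choiMatrix (pauliMap a b c)).PosSemidef ↔ |a + b| ≤ 1 + c ∧ |a - b| ≤ 1 - c := by
  constructor
  · intro h
    have h1 : ∀ s : ℝ, s = 1 ∨ s = -1 → 0 ≤ 1 + c + s * (a + b) := by
      intro s hs
      have := h.dotProduct_mulVec_nonneg (fun p => if p = (0,0) then 1 else if p = (1,1) then (s:ℂ) else 0)
      rw [quadForm] at this
      have h0 : (0:ℂ) ≤ (((1+c) + s*(a+b) : ℝ) : ℂ) := by
        convert this using 1
        rcases hs with hs | hs <;> subst hs <;> norm_num [Prod.ext_iff, Fin.ext_iff] <;> push_cast <;> ring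
      rw [Complex.zero_le_real] at h0
      linarith
    have h2 : ∀ s : ℝ, s = 1 ∨ s = -1 → 0 ≤ 1 - c + s * (a - b) := by
      intro s hs
      have := h.dotProduct_mulVec_nonneg (fun p => if p = (0,1) then 1 else if p = (1,0) then (s:ℂ) else 0)
      rw [quadForm] at this
      have h0 : (0:ℂ) ≤ (((1-c) + s*(a-b) : ℝ) : ℂ) := by
        convert this using 1
        rcases hs with hs | hs <;> subst hs <;> norm_num [Prod.ext_iff, Fin.ext_iff] <;> push_cast <;> ring
      rw [Complex.zero_le_real] at h0
      linarith
    constructor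
    · rw [abs_le]
      constructor
      · have := h1 1 (Or.inl rfl); linarith
      · have := h1 (-1) (Or.inr rfl); linarith
    · rw [abs_le]
      constructor
      · have := h2 1 (Or.inl rfl); linarith
      · have := h2 (-1) (Or.inr rfl); linarith
  · rintro ⟨hab, hab'⟩
    refine PosSemidef.of_dotProduct_mulVec_nonneg (hermPart a b c) (fun x => ?_)
    rw [quadForm]
    have k1 := keyIneq (1+c) (a+b) (by linarith [abs_nonneg (a+b)]) (x (0,0)) (x (1,1))
    have k2 := keyIneq (1-c) (a-b) (by linarith [abs_nonneg (a-b)]) (x (0,1)) (x (1,0))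
    have := add_nonneg k1 k2
    convert this using 1
    ring
end

section
/- If a linear map S: span{I, σ_x, σ_y} → M₂(ℂ) satisfies S(I) = I, S(σ_x) = a σ_x, S(σ_y) = b σ_y with |a| ≤ 1 and |b| ≤ 1, then S extends to a unital, trace-preserving, completely positive map on all of M₂(ℂ), namely a Pauli diagonal channel with some parameter c on σ_z. -/
open Matrix ComplexOrder

/-- Explicit form of the Choi matrix of the Pauli map with `c = a*b`. -/
noncomputable def choiExplicit (a b : ℝ) : Matrix (Fin 2 × Fin 2) (Fin 2 × Fin 2) ℂ :=
  fun p q =>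
    (!![((1+a*b)/2 : ℂ), 0, 0, (a+b)/2;
        0, (1-a*b)/2, (a-b)/2, 0;
        0, (a-b)/2, (1-a*b)/2, 0;
        (a+b)/2, 0, 0, (1+a*b)/2] : Matrix (Fin 4) (Fin 4) ℂ)
      ⟨2*p.1.val + p.2.val, by omega⟩ ⟨2*q.1.val + q.2.val, by omega⟩

lemma choiMatrix_pauliMap_eq (a b : ℝ) :
    choiMatrix (pauliMap a b (a*b)) = choiExplicit a b := by
  ext p q
  obtain ⟨p1, p2⟩ := p; obtain ⟨q1, q2⟩ := q
  fin_cases p1 <;> fin_cases p2 <;> fin_cases q1 <;> fin_cases q2 <;>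
    simp [choiMatrix, choiExplicit, pauliMap, sigmaX, sigmaY, sigmaZ,
      Matrix.single, Matrix.one_apply] <;> ring_nf <;> simp [Complex.I_sq] <;> ring

lemma choiExplicit_posSemidef (a b : ℝ) (ha : |a| ≤ 1) (hb : |b| ≤ 1) :
    (choiExplicit a b).PosSemidef := by
  obtain ⟨ha1, ha2⟩ := abs_le.mp ha
  obtain ⟨hb1, hb2⟩ := abs_le.mp hb
  rw [posSemidef_iff_dotProduct_mulVec]
  constructor
  · ext p q
    obtain ⟨p1, p2⟩ := p; obtain ⟨q1, q2⟩ := q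
    fin_cases p1 <;> fin_cases p2 <;> fin_cases q1 <;> fin_cases q2 <;>
      simp [choiExplicit, Matrix.conjTranspose_apply, Complex.ext_iff]
  · intro x
    simp only [dotProduct, mulVec, Fintype.sum_prod_type, Fin.sum_univ_two, choiExplicit,
      Pi.star_apply]
    set z1 := x (0,0); set z2 := x (0,1); set z3 := x (1,0); set z4 := x (1,1)
    norm_num [Matrix.cons_val', Matrix.cons_val_zero, Matrix.cons_val_one]
    have key : (starRingEnd ℂ) z1 * ((1 + ↑a * ↑b) / 2 * z1 + (↑a + ↑b) / 2 * z4) +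
          (starRingEnd ℂ) z2 * ((1 - ↑a * ↑b) / 2 * z2 + (↑a - ↑b) / 2 * z3) +
        ((starRingEnd ℂ) z3 * ((↑a - ↑b) / 2 * z2 + (1 - ↑a * ↑b) / 2 * z3) +
          (starRingEnd ℂ) z4 * ((↑a + ↑b) / 2 * z1 + (1 + ↑a * ↑b) / 2 * z4)) =
        (((1+a)*(1+b)/4 * Complex.normSq (z1+z4) + (1-a)*(1-b)/4 * Complex.normSq (z1-z4) +
          (1+a)*(1-b)/4 * Complex.normSq (z2+z3) + (1-a)*(1+b)/4 * Complex.normSq (z2-z3) : ℝ) : ℂ) := by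
      push_cast
      rw [Complex.normSq_eq_conj_mul_self, Complex.normSq_eq_conj_mul_self,
        Complex.normSq_eq_conj_mul_self, Complex.normSq_eq_conj_mul_self]
      simp only [map_add, map_sub]
      ring
    rw [key, Complex.zero_le_real]
    have n1 := Complex.normSq_nonneg (z1+z4)
    have n2 := Complex.normSq_nonneg (z1-z4)
    have n3 := Complex.normSq_nonneg (z2+z3)
    have n4 := Complex.normSq_nonneg (z2-z3)
    nlinarith [mul_nonneg (mul_nonneg (by linarith : (0:ℝ) ≤ 1+a) (by linarith : (0:ℝ) ≤ 1+b)) n1,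
      mul_nonneg (mul_nonneg (by linarith : (0:ℝ) ≤ 1-a) (by linarith : (0:ℝ) ≤ 1-b)) n2,
      mul_nonneg (mul_nonneg (by linarith : (0:ℝ) ≤ 1+a) (by linarith : (0:ℝ) ≤ 1-b)) n3,
      mul_nonneg (mul_nonneg (by linarith : (0:ℝ) ≤ 1-a) (by linarith : (0:ℝ) ≤ 1+b)) n4]

theorem pauliMap_unital_cptp_extension (a b : ℝ) (ha : |a| ≤ 1) (hb : |b| ≤ 1) :
    ∃ c : ℝ,
      (choiMatrix (pauliMap a b c)).PosSemidef ∧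
      pauliMap a b c 1 = 1 ∧
      (∀ X : Matrix (Fin 2) (Fin 2) ℂ, (pauliMap a b c X).trace = X.trace) ∧
      pauliMap a b c sigmaX = (a : ℂ) • sigmaX ∧
      pauliMap a b c sigmaY = (b : ℂ) • sigmaY ∧
      pauliMap a b c sigmaZ = (c : ℂ) • sigmaZ := by
  refine ⟨a * b, ?_, ?_, ?_, ?_, ?_, ?_⟩
  · rw [choiMatrix_pauliMap_eq]
    exact choiExplicit_posSemidef a b ha hb
  · ext i j
    fin_cases i <;> fin_cases j <;>
      simp [pauliMap, sigmaX, sigmaY, sigmaZ, Matrix.one_apply]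
  · intro X
    simp [pauliMap, Matrix.trace, sigmaX, sigmaY, sigmaZ, Fin.sum_univ_two, Matrix.one_apply]
    ring
  · ext i j
    fin_cases i <;> fin_cases j <;>
      simp [pauliMap, sigmaX, sigmaY, sigmaZ, Matrix.one_apply] <;> ring_nf
  · ext i j
    fin_cases i <;> fin_cases j <;>
      simp [pauliMap, sigmaX, sigmaY, sigmaZ, Matrix.one_apply] <;> ring_nf <;>
      simp [Complex.I_sq]
  · ext i j
    fin_cases i <;> fin_cases j <;>
      simp [pauliMap, sigmaX, sigmaY, sigmaZ, Matrix.one_apply] <;> ring_nf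
end
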